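/- arXiv:math-ph/0408032 — 3 statements merged into one kernel-verified Lean document; each statement's English description precedes it below -/
import Mathlib

section
/- Let θ : [t₀,t] → ℂ be continuously differentiable, t₀ = τ₀ < τ₁ < ... < τ_{k+1} = t, and x₀ = y, x_{k+1} = x with x₁,...,x_k ∈ ℝ. Then |∑_{j=1}^{k+1} ((x_j − x_{j−1})/(τ_j − τ_{j−1})) ∫_{τ_{j−1}}^{τ_j} θ(s) ds| ≤ 2 max_{0≤j≤k+1} |x_j| · (sup_{s∈[t₀,t]} |θ(s)| + ∫_{t₀}^{t} |θ'(s)| ds). -/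
open MeasureTheory intervalIntegral

private lemma abel_aux (x A : ℕ → ℂ) (n : ℕ) :
    ∑ j ∈ Finset.range (n + 1), (x (j + 1) - x j) * A j
      = x (n + 1) * A n - x 0 * A 0
        - ∑ j ∈ Finset.range n, x (j + 1) * (A (j + 1) - A j) := by
  induction n with
  | zero => simp; ring
  | succ m ih =>
      rw [Finset.sum_range_succ, ih, Finset.sum_range_succ]
      ring

/-- Abel-summation / mean-value estimate: for a `C¹` function `θ : ℝ → ℂ`, a
partition `t₀ = τ₀ < ⋯ < τ_{k+1} = t` and reals `x₀ = y, x₁, …, x_k, x_{k+1} = x`,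
`|∑_{j=1}^{k+1} ((x_j − x_{j−1})/(τ_j − τ_{j−1})) ∫_{τ_{j−1}}^{τ_j} θ|
  ≤ 2 max_j |x_j| (sup_{[t₀,t]} |θ| + ∫_{t₀}^{t} |θ'|)`. -/
theorem abel_summation_bound (k : ℕ) (τ : ℕ → ℝ)
    (hτ : ∀ j ≤ k, τ j < τ (j + 1)) (x : ℕ → ℝ)
    (θ : ℝ → ℂ) (hθ : ContDiff ℝ 1 θ) :
    ‖∑ j ∈ Finset.range (k + 1),
        ((((x (j + 1) - x j) / (τ (j + 1) - τ j) : ℝ)) : ℂ) * ∫ s in τ j..τ (j + 1), θ s‖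
      ≤ 2 * ((Finset.range (k + 2)).sup' (Finset.nonempty_range_iff.mpr (Nat.succ_ne_zero _))
              fun j => |x j|) *
          (sSup ((fun s => ‖θ s‖) '' Set.Icc (τ 0) (τ (k + 1))) +
            ∫ s in (τ 0)..(τ (k + 1)), ‖deriv θ s‖) := by
  have hcθ : Continuous θ := hθ.continuous
  have hcθ' : Continuous (deriv θ) := hθ.continuous_deriv le_rfl
  have hiθ : ∀ a b : ℝ, IntervalIntegrable θ volume a b :=
    fun a b => hcθ.intervalIntegrable a b
  have hiθ' : ∀ a b : ℝ, IntervalIntegrable (deriv θ) volume a b :=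
    fun a b => hcθ'.intervalIntegrable a b
  have hiθ'n : ∀ a b : ℝ, IntervalIntegrable (fun s => ‖deriv θ s‖) volume a b :=
    fun a b => hcθ'.norm.intervalIntegrable a b
  have hτle : ∀ i j : ℕ, i ≤ j → j ≤ k + 1 → τ i ≤ τ j := by
    intro i j hij hj
    induction j with
    | zero => simp [Nat.le_zero.mp hij]
    | succ n ih =>
        rcases hij.lt_or_eq with h | rfl
        · exact (ih (Nat.lt_succ_iff.mp h) (by omega)).trans (le_of_lt (hτ n (by omega)))
        · exact le_rfl
  set M := ((Finset.range (k + 2)).sup' (Finset.nonempty_range_iff.mpr (Nat.succ_ne_zero _))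
      fun j => |x j|) with hMdef
  set S := sSup ((fun s => ‖θ s‖) '' Set.Icc (τ 0) (τ (k + 1))) with hSdef
  set T := ∫ s in (τ 0)..(τ (k + 1)), ‖deriv θ s‖ with hTdef
  have hτ0k : τ 0 ≤ τ (k + 1) := hτle 0 (k + 1) (Nat.zero_le _) le_rfl
  have hbdd : BddAbove ((fun s => ‖θ s‖) '' Set.Icc (τ 0) (τ (k + 1))) :=
    (isCompact_Icc.image hcθ.norm).bddAbove
  have hSmem : ∀ s ∈ Set.Icc (τ 0) (τ (k + 1)), ‖θ s‖ ≤ S :=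
    fun s hs => le_csSup hbdd ⟨s, hs, rfl⟩
  have hS0 : 0 ≤ S := le_trans (norm_nonneg _) (hSmem (τ 0) ⟨le_rfl, hτ0k⟩)
  have hMj : ∀ j, j ≤ k + 1 → |x j| ≤ M := by
    intro j hj
    rw [hMdef]
    exact Finset.le_sup' (fun i => |x i|) (Finset.mem_range.mpr (by omega))
  have hM0 : (0 : ℝ) ≤ M := (abs_nonneg _).trans (hMj 0 (by omega))
  set E : ℕ → ℝ := fun j => ∫ s in τ j..τ (j + 1), ‖deriv θ s‖ with hEdef
  set A : ℕ → ℂ := fun j => (∫ s in τ j..τ (j + 1), θ s) / ((τ (j + 1) - τ j : ℝ) : ℂ)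
    with hAdef
  have hE0 : ∀ j, j ≤ k → 0 ≤ E j := by
    intro j hj
    exact intervalIntegral.integral_nonneg (hτ j hj).le (fun u _ => norm_nonneg _)
  have hsub : ∀ j, j ≤ k → Set.Icc (τ j) (τ (j + 1)) ⊆ Set.Icc (τ 0) (τ (k + 1)) :=
    fun j hj => Set.Icc_subset_Icc (hτle 0 j (Nat.zero_le _) (by omega))
      (hτle (j + 1) (k + 1) (by omega) le_rfl)
  have hA_le : ∀ j, j ≤ k → ‖A j‖ ≤ S := by
    intro j hj
    have hab : τ j < τ (j + 1) := hτ j hj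
    have h1 : ‖∫ s in τ j..τ (j + 1), θ s‖ ≤ S * |τ (j + 1) - τ j| := by
      apply intervalIntegral.norm_integral_le_of_norm_le_const
      intro s hs
      rw [Set.uIoc_of_le hab.le] at hs
      exact hSmem s (hsub j hj ⟨hs.1.le, hs.2⟩)
    have habs : (0 : ℝ) < |τ (j + 1) - τ j| := abs_pos.mpr (sub_ne_zero.mpr hab.ne')
    have hnorm : ‖A j‖ = ‖∫ s in τ j..τ (j + 1), θ s‖ / |τ (j + 1) - τ j| := by
      simp only [hAdef]
      rw [norm_div, Complex.norm_real, Real.norm_eq_abs]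
    rw [hnorm, div_le_iff₀ habs]
    exact h1
  -- pointwise bounds for `θ s - θ (endpoint)`
  have hθdiff : ∀ a s : ℝ, θ s - θ a = ∫ u in a..s, deriv θ u := by
    intro a s
    rw [intervalIntegral.integral_deriv_eq_sub
      (fun u _ => (hθ.differentiable one_ne_zero).differentiableAt) (hiθ' a s)]
  have hstep : ∀ j, j ≤ k → ∀ s ∈ Set.Icc (τ j) (τ (j + 1)),
      ‖θ s - θ (τ j)‖ ≤ E j ∧ ‖θ s - θ (τ (j + 1))‖ ≤ E j := by
    intro j hj s hs
    constructor
    · rw [hθdiff (τ j) s]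
      calc ‖∫ u in τ j..s, deriv θ u‖ ≤ ∫ u in τ j..s, ‖deriv θ u‖ :=
            intervalIntegral.norm_integral_le_integral_norm hs.1
        _ ≤ E j := intervalIntegral.integral_mono_interval le_rfl hs.1 hs.2
            (ae_of_all _ fun u => norm_nonneg _) (hiθ'n _ _)
    · rw [hθdiff (τ (j + 1)) s, intervalIntegral.integral_symm, norm_neg]
      calc ‖∫ u in s..τ (j + 1), deriv θ u‖ ≤ ∫ u in s..τ (j + 1), ‖deriv θ u‖ :=
            intervalIntegral.norm_integral_le_integral_norm hs.2
        _ ≤ E j := intervalIntegral.integral_mono_interval hs.1 hs.2 le_rfl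
            (ae_of_all _ fun u => norm_nonneg _) (hiθ'n _ _)
  have hAnear : ∀ j, j ≤ k → ‖A j - θ (τ j)‖ ≤ E j ∧ ‖A j - θ (τ (j + 1))‖ ≤ E j := by
    intro j hj
    have hab : τ j < τ (j + 1) := hτ j hj
    have hne : ((τ (j + 1) - τ j : ℝ) : ℂ) ≠ 0 :=
      Complex.ofReal_ne_zero.mpr (sub_ne_zero.mpr hab.ne')
    have key : ∀ c : ℂ, (∀ s ∈ Set.Icc (τ j) (τ (j + 1)), ‖θ s - c‖ ≤ E j) →
        ‖A j - c‖ ≤ E j := by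
      intro c hc
      have h1 : A j - c = (∫ s in τ j..τ (j + 1), (θ s - c)) / ((τ (j + 1) - τ j : ℝ) : ℂ) := by
        simp only [hAdef]
        rw [intervalIntegral.integral_sub (hiθ _ _) intervalIntegrable_const,
          intervalIntegral.integral_const, Complex.real_smul, sub_div,
          mul_div_cancel_left₀ _ hne]
      have h2 : ‖∫ s in τ j..τ (j + 1), (θ s - c)‖ ≤ E j * |τ (j + 1) - τ j| := by
        apply intervalIntegral.norm_integral_le_of_norm_le_const
        intro s hs
        rw [Set.uIoc_of_le hab.le] at hs
        exact hc s ⟨hs.1.le, hs.2⟩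
      have habs : (0 : ℝ) < |τ (j + 1) - τ j| := abs_pos.mpr (sub_ne_zero.mpr hab.ne')
      have h3 : ‖A j - c‖ = ‖∫ s in τ j..τ (j + 1), (θ s - c)‖ / |τ (j + 1) - τ j| := by
        rw [h1, norm_div, Complex.norm_real, Real.norm_eq_abs]
      rw [h3, div_le_iff₀ habs]
      exact h2
    exact ⟨key _ (fun s hs => (hstep j hj s hs).1), key _ (fun s hs => (hstep j hj s hs).2)⟩
  have hAdiff : ∀ j, j + 1 ≤ k → ‖A (j + 1) - A j‖ ≤ E j + E (j + 1) := by
    intro j hj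
    have : A (j + 1) - A j = (A (j + 1) - θ (τ (j + 1))) - (A j - θ (τ (j + 1))) := by ring
    rw [this]
    calc ‖(A (j + 1) - θ (τ (j + 1))) - (A j - θ (τ (j + 1)))‖
        ≤ ‖A (j + 1) - θ (τ (j + 1))‖ + ‖A j - θ (τ (j + 1))‖ := norm_sub_le _ _
      _ ≤ E (j + 1) + E j := add_le_add ((hAnear (j + 1) hj).1) ((hAnear j (by omega)).2)
      _ = E j + E (j + 1) := by ring
  -- rewrite the sum
  have hsum_eq : (∑ j ∈ Finset.range (k + 1),
        ((((x (j + 1) - x j) / (τ (j + 1) - τ j) : ℝ)) : ℂ) * ∫ s in τ j..τ (j + 1), θ s)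
      = ∑ j ∈ Finset.range (k + 1),
          (((x (j + 1) : ℝ) : ℂ) - ((x j : ℝ) : ℂ)) * A j := by
    refine Finset.sum_congr rfl fun j hj => ?_
    rw [hAdef]
    push_cast
    ring
  have hT : ∑ j ∈ Finset.range (k + 1), E j = T := by
    rw [hTdef, hEdef]
    exact intervalIntegral.sum_integral_adjacent_intervals (fun i _ => hiθ'n _ _)
  have hsumE : ∑ j ∈ Finset.range k, (E j + E (j + 1)) ≤ 2 * T := by
    rw [← hT]
    rw [Finset.sum_add_distrib]
    have h1 : ∑ j ∈ Finset.range k, E j ≤ ∑ j ∈ Finset.range (k + 1), E j := by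
      apply Finset.sum_le_sum_of_subset_of_nonneg
        (Finset.range_subset_range.mpr (by omega))
      intro i hi _
      exact hE0 i (by have := Finset.mem_range.mp hi; omega)
    have h2 : ∑ j ∈ Finset.range k, E (j + 1) ≤ ∑ j ∈ Finset.range (k + 1), E j := by
      have h2' := Finset.sum_range_succ' E k
      have hE00 := hE0 0 (Nat.zero_le k)
      linarith
    linarith
  rw [hsum_eq, abel_aux (fun j => ((x j : ℝ) : ℂ)) A k]
  have hnx : ∀ j : ℕ, ‖((x j : ℝ) : ℂ)‖ = |x j| := fun j => by
    simp [Complex.norm_real]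
  have hbound1 : ‖((x (k + 1) : ℝ) : ℂ) * A k‖ ≤ M * S := by
    rw [norm_mul, hnx]
    exact mul_le_mul (hMj (k + 1) le_rfl) (hA_le k le_rfl) (norm_nonneg _) hM0
  have hbound2 : ‖((x 0 : ℝ) : ℂ) * A 0‖ ≤ M * S := by
    rw [norm_mul, hnx]
    exact mul_le_mul (hMj 0 (by omega)) (hA_le 0 (by omega)) (norm_nonneg _) hM0
  have hbound3 : ‖∑ j ∈ Finset.range k, ((x (j + 1) : ℝ) : ℂ) * (A (j + 1) - A j)‖
      ≤ M * (2 * T) := by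
    calc ‖∑ j ∈ Finset.range k, ((x (j + 1) : ℝ) : ℂ) * (A (j + 1) - A j)‖
        ≤ ∑ j ∈ Finset.range k, ‖((x (j + 1) : ℝ) : ℂ) * (A (j + 1) - A j)‖ :=
          norm_sum_le _ _
      _ ≤ ∑ j ∈ Finset.range k, M * (E j + E (j + 1)) := by
          apply Finset.sum_le_sum
          intro j hj
          rw [norm_mul, hnx]
          exact mul_le_mul (hMj (j + 1) (by have := Finset.mem_range.mp hj; omega))
            (hAdiff j (Finset.mem_range.mp hj)) (norm_nonneg _) hM0
      _ = M * ∑ j ∈ Finset.range k, (E j + E (j + 1)) := by rw [Finset.mul_sum]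
      _ ≤ M * (2 * T) := mul_le_mul_of_nonneg_left hsumE hM0
  calc ‖((x (k + 1) : ℝ) : ℂ) * A k - ((x 0 : ℝ) : ℂ) * A 0
        - ∑ j ∈ Finset.range k, ((x (j + 1) : ℝ) : ℂ) * (A (j + 1) - A j)‖
      ≤ ‖((x (k + 1) : ℝ) : ℂ) * A k - ((x 0 : ℝ) : ℂ) * A 0‖
        + ‖∑ j ∈ Finset.range k, ((x (j + 1) : ℝ) : ℂ) * (A (j + 1) - A j)‖ :=
        norm_sub_le _ _
    _ ≤ ‖((x (k + 1) : ℝ) : ℂ) * A k‖ + ‖((x 0 : ℝ) : ℂ) * A 0‖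
        + ‖∑ j ∈ Finset.range k, ((x (j + 1) : ℝ) : ℂ) * (A (j + 1) - A j)‖ := by
        have := norm_sub_le (((x (k + 1) : ℝ) : ℂ) * A k) (((x 0 : ℝ) : ℂ) * A 0)
        linarith
    _ ≤ M * S + M * S + M * (2 * T) := by linarith
    _ = 2 * M * (S + T) := by ring
end

section
/- Fix t₀ < t and a C¹ function ξ : ℝ → ℝ. The function K₀^{(ξ)}(x,t|y,t₀) := (2πi(t−t₀))^{-1/2} exp(−(i/2)∫_{t₀}^{t} ξ(τ)²dτ) · exp((i/(2(t−t₀)))(∫_{t₀}^{t}ξ(τ)dτ + x − y)²) · exp(iyξ(t₀) − ixξ(t)) satisfies, for t > t₀, the Schrödinger equation with linear time-dependent potential: i∂_t K₀^{(ξ)} + (1/2)∂_x² K₀^{(ξ)} − ξ'(t)x·K₀^{(ξ)} = 0. -/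
open Complex intervalIntegral

/-- The propagator `K₀^{(ξ)}(x,t|y,t₀)` for the time-dependent linear potential
`ξ'(t)x` (principal branch of the square root). -/
noncomputable def linProp (ξ : ℝ → ℝ) (t₀ y : ℝ) (x t : ℝ) : ℂ :=
  (2 * Real.pi * Complex.I * ((t : ℂ) - (t₀ : ℂ))) ^ (-(1 / 2) : ℂ) *
    Complex.exp (-(Complex.I / 2) * ((∫ τ in t₀..t, (ξ τ) ^ 2 : ℝ) : ℂ)) *
    Complex.exp (Complex.I / (2 * ((t : ℂ) - (t₀ : ℂ))) *
      (((∫ τ in t₀..t, ξ τ : ℝ) : ℂ) + (x : ℂ) - (y : ℂ)) ^ 2) *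
    Complex.exp (Complex.I * (y : ℂ) * (ξ t₀ : ℂ) - Complex.I * (x : ℂ) * (ξ t : ℂ))

set_option maxHeartbeats 1000000 in
/-- For a `C¹` function `ξ`, `K₀^{(ξ)}` satisfies the Schrödinger equation with
linear time-dependent potential:
`i∂_t K₀^{(ξ)} + (1/2)∂_x² K₀^{(ξ)} − ξ'(t)x K₀^{(ξ)} = 0` for `t > t₀`. -/
theorem linProp_schrodinger (ξ : ℝ → ℝ) (hξ : ContDiff ℝ 1 ξ) (t₀ y : ℝ) :
    ∀ x t : ℝ, t₀ < t →
      Complex.I * deriv (fun s : ℝ => linProp ξ t₀ y x s) t +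
        (1 / 2 : ℂ) * deriv (fun u : ℝ => deriv (fun v : ℝ => linProp ξ t₀ y v t) u) x -
        ((deriv ξ t : ℝ) : ℂ) * (x : ℂ) * linProp ξ t₀ y x t = 0 := by
  intro x t ht
  have hcont : Continuous ξ := hξ.continuous
  have hT : ((t : ℂ) - (t₀ : ℂ)) ≠ 0 := sub_ne_zero.mpr (by exact_mod_cast ht.ne')
  set S : ℝ → ℂ := fun s => ((∫ τ in t₀..s, (ξ τ) ^ 2 : ℝ) : ℂ) with hSdef
  set A : ℝ → ℂ := fun s => ((∫ τ in t₀..s, ξ τ : ℝ) : ℂ) with hAdef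
  set P : ℝ → ℂ := fun s => (2 * Real.pi * Complex.I * ((s : ℂ) - (t₀ : ℂ))) ^ (-(1 / 2) : ℂ)
    with hPdef
  set L : ℝ → ℝ → ℂ := fun v s =>
      -(Complex.I / 2) * S s +
        Complex.I / (2 * ((s : ℂ) - (t₀ : ℂ))) * (A s + (v : ℂ) - (y : ℂ)) ^ 2 +
        (Complex.I * (y : ℂ) * (ξ t₀ : ℂ) - Complex.I * (v : ℂ) * (ξ s : ℂ)) with hLdef
  have hK : ∀ v s : ℝ, linProp ξ t₀ y v s = P s * Complex.exp (L v s) := by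
    intro v s
    simp only [linProp, hLdef, hPdef, hSdef, hAdef, Complex.exp_add]
    ring
  -- derivative of the coerced real-valued t ↦ (t : ℂ)
  have hid : ∀ u : ℝ, HasDerivAt (fun s : ℝ => (s : ℂ)) 1 u := by
    intro u
    simpa using (hasDerivAt_id u).ofReal_comp
  have hTs : HasDerivAt (fun s : ℝ => ((s : ℂ) - (t₀ : ℂ))) 1 t := by
    simpa using (hid t).sub_const (t₀ : ℂ)
  -- FTC derivatives
  have hA : HasDerivAt A ((ξ t : ℂ)) t := by
    have h1 : HasDerivAt (fun u => ∫ τ in t₀..u, ξ τ) (ξ t) t :=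
      integral_hasDerivAt_right (hcont.intervalIntegrable t₀ t)
        (hcont.stronglyMeasurableAtFilter _ _) hcont.continuousAt
    exact h1.ofReal_comp
  have hS : HasDerivAt S (((ξ t : ℂ)) ^ 2) t := by
    have hc2 : Continuous fun τ => (ξ τ) ^ 2 := hcont.pow 2
    have h1 : HasDerivAt (fun u => ∫ τ in t₀..u, (ξ τ) ^ 2) ((ξ t) ^ 2) t :=
      integral_hasDerivAt_right (hc2.intervalIntegrable t₀ t)
        (hc2.stronglyMeasurableAtFilter _ _) hc2.continuousAt
    have := h1.ofReal_comp
    push_cast at this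
    exact this
  have hξd : HasDerivAt ξ (deriv ξ t) t :=
    ((hξ.differentiable one_ne_zero) t).hasDerivAt
  have hξC : HasDerivAt (fun s : ℝ => ((ξ s : ℂ))) (((deriv ξ t : ℝ) : ℂ)) t := hξd.ofReal_comp
  -- derivative of the prefactor
  have hbase : HasDerivAt (fun s : ℝ => 2 * (Real.pi : ℂ) * Complex.I * ((s : ℂ) - (t₀ : ℂ)))
      (2 * (Real.pi : ℂ) * Complex.I) t := by
    simpa using hTs.const_mul (2 * (Real.pi : ℂ) * Complex.I)
  have him : (2 * (Real.pi : ℂ) * Complex.I * ((t : ℂ) - (t₀ : ℂ))).im = 2 * Real.pi * (t - t₀) := by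
    have : (2 * (Real.pi : ℂ) * Complex.I * ((t : ℂ) - (t₀ : ℂ)))
        = ((2 * Real.pi * (t - t₀) : ℝ) : ℂ) * Complex.I := by push_cast; ring
    rw [this]
    simp
  have him0 : (2 * (Real.pi : ℂ) * Complex.I * ((t : ℂ) - (t₀ : ℂ))).im ≠ 0 := by
    rw [him]
    have := Real.pi_pos
    nlinarith [sub_pos.mpr ht]
  have hbne : (2 * (Real.pi : ℂ) * Complex.I * ((t : ℂ) - (t₀ : ℂ))) ≠ 0 := by
    intro h; rw [h] at him0; simp at him0
  have hP : HasDerivAt P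
      ((-(1 / 2) : ℂ) * (2 * (Real.pi : ℂ) * Complex.I * ((t : ℂ) - (t₀ : ℂ))) ^ ((-(1 / 2) : ℂ) - 1)
        * (2 * (Real.pi : ℂ) * Complex.I)) t := by
    rw [hPdef]
    have houter := (Complex.hasStrictDerivAt_cpow_const (c := (-(1 / 2) : ℂ))
      (Complex.mem_slitPlane_iff.mpr (Or.inr him0))).hasDerivAt
    have := houter.comp t hbase
    simpa [Function.comp_def] using this
  have hPsplit : (2 * (Real.pi : ℂ) * Complex.I * ((t : ℂ) - (t₀ : ℂ))) ^ ((-(1 / 2) : ℂ) - 1)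
      = P t * (2 * (Real.pi : ℂ) * Complex.I * ((t : ℂ) - (t₀ : ℂ)))⁻¹ := by
    rw [show ((-(1 / 2) : ℂ) - 1) = (-(1 / 2) : ℂ) + (-1 : ℂ) by ring,
      Complex.cpow_add _ _ hbne, Complex.cpow_neg_one, hPdef]
  -- derivative of b(s) = I/(2(s - t₀))
  have h2T : HasDerivAt (fun s : ℝ => 2 * ((s : ℂ) - (t₀ : ℂ))) 2 t := by
    simpa using hTs.const_mul (2 : ℂ)
  have h2Tne : (2 * ((t : ℂ) - (t₀ : ℂ))) ≠ 0 := mul_ne_zero two_ne_zero hT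
  have hb : HasDerivAt (fun s : ℝ => Complex.I / (2 * ((s : ℂ) - (t₀ : ℂ))))
      (Complex.I * (-2 / (2 * ((t : ℂ) - (t₀ : ℂ))) ^ 2)) t := by
    simp only [div_eq_mul_inv]
    have hinv := (hasDerivAt_inv h2Tne).comp t h2T
    have h2 : HasDerivAt (fun s : ℝ => (2 * ((s : ℂ) - (t₀ : ℂ)))⁻¹)
        (-((2 * ((t : ℂ) - (t₀ : ℂ))) ^ 2)⁻¹ * 2) t := by
      simpa [Function.comp_def] using hinv
    have := h2.const_mul Complex.I
    exact this.congr_deriv (by ring)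
  -- t-derivative of L x ·
  have hQ : HasDerivAt (fun s : ℝ => A s + (x : ℂ) - (y : ℂ)) ((ξ t : ℂ)) t :=
    (hA.add_const _).sub_const _
  have hQ2 : HasDerivAt (fun s : ℝ => (A s + (x : ℂ) - (y : ℂ)) ^ 2)
      (2 * (A t + (x : ℂ) - (y : ℂ)) * (ξ t : ℂ)) t := by
    have h := hQ.mul hQ
    have heq : (fun s : ℝ => (A s + (x : ℂ) - (y : ℂ)) ^ 2)
        = fun s : ℝ => (A s + (x : ℂ) - (y : ℂ)) * (A s + (x : ℂ) - (y : ℂ)) := by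
      funext s; ring
    rw [heq]
    exact h.congr_deriv (by ring)
  have hLt : HasDerivAt (fun s : ℝ => L x s)
      (-(Complex.I / 2) * ((ξ t : ℂ)) ^ 2 +
        (Complex.I * (-2 / (2 * ((t : ℂ) - (t₀ : ℂ))) ^ 2) * (A t + (x : ℂ) - (y : ℂ)) ^ 2 +
          Complex.I / (2 * ((t : ℂ) - (t₀ : ℂ))) * (2 * (A t + (x : ℂ) - (y : ℂ)) * (ξ t : ℂ))) +
        (-(Complex.I * (x : ℂ) * ((deriv ξ t : ℝ) : ℂ)))) t := by
    have h1 := hS.const_mul (-(Complex.I / 2))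
    have h2 := hb.mul hQ2
    have h3 : HasDerivAt (fun s : ℝ => Complex.I * (y : ℂ) * (ξ t₀ : ℂ) - Complex.I * (x : ℂ) * (ξ s : ℂ))
        (-(Complex.I * (x : ℂ) * ((deriv ξ t : ℝ) : ℂ))) t := by
      have := (hξC.const_mul (Complex.I * (x : ℂ))).const_sub (Complex.I * (y : ℂ) * (ξ t₀ : ℂ))
      simpa [mul_assoc] using this
    exact (h1.add h2).add h3
  -- full t-derivative of linProp
  have hfunt : (fun s : ℝ => linProp ξ t₀ y x s) = fun s : ℝ => P s * Complex.exp (L x s) :=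
    funext fun s => hK x s
  have hKt := (hP.mul hLt.cexp)
  have hdt : deriv (fun s : ℝ => linProp ξ t₀ y x s) t
      = (-(1 / 2) : ℂ) * (P t * (2 * (Real.pi : ℂ) * Complex.I * ((t : ℂ) - (t₀ : ℂ)))⁻¹)
          * (2 * (Real.pi : ℂ) * Complex.I) * Complex.exp (L x t)
        + P t * (Complex.exp (L x t) *
          (-(Complex.I / 2) * ((ξ t : ℂ)) ^ 2 +
            (Complex.I * (-2 / (2 * ((t : ℂ) - (t₀ : ℂ))) ^ 2) * (A t + (x : ℂ) - (y : ℂ)) ^ 2 +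
              Complex.I / (2 * ((t : ℂ) - (t₀ : ℂ))) * (2 * (A t + (x : ℂ) - (y : ℂ)) * (ξ t : ℂ))) +
            (-(Complex.I * (x : ℂ) * ((deriv ξ t : ℝ) : ℂ))))) := by
    rw [hfunt, ← hPsplit]
    exact hKt.deriv
  -- first x-derivative, at every point u
  have hLx : ∀ u : ℝ, HasDerivAt (fun v : ℝ => L v t)
      (Complex.I / (2 * ((t : ℂ) - (t₀ : ℂ))) * (2 * (A t + (u : ℂ) - (y : ℂ)))
        - Complex.I * (ξ t : ℂ)) u := by
    intro u
    have h4 : HasDerivAt (fun v : ℝ => (A t + (v : ℂ) - (y : ℂ)) ^ 2)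
        (2 * (A t + (u : ℂ) - (y : ℂ))) u := by
      have hin : HasDerivAt (fun v : ℝ => A t + (v : ℂ) - (y : ℂ)) 1 u := by
        simpa using ((hid u).const_add (A t)).sub_const (y : ℂ)
      have h := hin.mul hin
      have heq : (fun v : ℝ => (A t + (v : ℂ) - (y : ℂ)) ^ 2)
          = fun v : ℝ => (A t + (v : ℂ) - (y : ℂ)) * (A t + (v : ℂ) - (y : ℂ)) := by
        funext v; ring
      rw [heq]
      exact h.congr_deriv (by ring)
    have h5 := h4.const_mul (Complex.I / (2 * ((t : ℂ) - (t₀ : ℂ))))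
    have h6 : HasDerivAt (fun v : ℝ => Complex.I * (y : ℂ) * (ξ t₀ : ℂ) - Complex.I * (v : ℂ) * (ξ t : ℂ))
        (-(Complex.I * (ξ t : ℂ))) u := by
      have hin : HasDerivAt (fun v : ℝ => Complex.I * (v : ℂ) * (ξ t : ℂ)) (Complex.I * (ξ t : ℂ)) u := by
        simpa using ((hid u).const_mul Complex.I).mul_const ((ξ t : ℂ))
      simpa using hin.const_sub (Complex.I * (y : ℂ) * (ξ t₀ : ℂ))
    have := ((hasDerivAt_const u (-(Complex.I / 2) * S t)).add h5).add h6
    simp only [hLdef, sub_eq_add_neg] at this ⊢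
    exact this.congr_deriv (by ring)
  have hKx : ∀ u : ℝ, HasDerivAt (fun v : ℝ => linProp ξ t₀ y v t)
      (P t * Complex.exp (L u t) *
        (Complex.I / (2 * ((t : ℂ) - (t₀ : ℂ))) * (2 * (A t + (u : ℂ) - (y : ℂ)))
          - Complex.I * (ξ t : ℂ))) u := by
    intro u
    have hfunx : (fun v : ℝ => linProp ξ t₀ y v t) = fun v : ℝ => P t * Complex.exp (L v t) :=
      funext fun v => hK v t
    rw [hfunx]
    have := ((hLx u).cexp).const_mul (P t)
    simpa [mul_assoc] using this
  have hdx : (fun u : ℝ => deriv (fun v : ℝ => linProp ξ t₀ y v t) u)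
      = fun u : ℝ => P t * Complex.exp (L u t) *
        (Complex.I / (2 * ((t : ℂ) - (t₀ : ℂ))) * (2 * (A t + (u : ℂ) - (y : ℂ)))
          - Complex.I * (ξ t : ℂ)) :=
    funext fun u => (hKx u).deriv
  -- second x-derivative
  have hd2 : deriv (fun u : ℝ => deriv (fun v : ℝ => linProp ξ t₀ y v t) u) x
      = P t * Complex.exp (L x t) *
          (Complex.I / (2 * ((t : ℂ) - (t₀ : ℂ))) * (2 * (A t + (x : ℂ) - (y : ℂ)))
            - Complex.I * (ξ t : ℂ)) *
          (Complex.I / (2 * ((t : ℂ) - (t₀ : ℂ))) * (2 * (A t + (x : ℂ) - (y : ℂ)))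
            - Complex.I * (ξ t : ℂ))
        + P t * Complex.exp (L x t) * (Complex.I / (2 * ((t : ℂ) - (t₀ : ℂ))) * 2) := by
    rw [hdx]
    have hg : HasDerivAt (fun u : ℝ =>
        Complex.I / (2 * ((t : ℂ) - (t₀ : ℂ))) * (2 * (A t + (u : ℂ) - (y : ℂ)))
          - Complex.I * (ξ t : ℂ)) (Complex.I / (2 * ((t : ℂ) - (t₀ : ℂ))) * 2) x := by
      have hin : HasDerivAt (fun u : ℝ => A t + (u : ℂ) - (y : ℂ)) 1 x := by
        simpa using ((hid x).const_add (A t)).sub_const (y : ℂ)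
      have := ((hin.const_mul (2 : ℂ)).const_mul (Complex.I / (2 * ((t : ℂ) - (t₀ : ℂ))))).sub_const
        (Complex.I * (ξ t : ℂ))
      simpa using this
    have hf : HasDerivAt (fun u : ℝ => P t * Complex.exp (L u t))
        (P t * Complex.exp (L x t) *
          (Complex.I / (2 * ((t : ℂ) - (t₀ : ℂ))) * (2 * (A t + (x : ℂ) - (y : ℂ)))
            - Complex.I * (ξ t : ℂ))) x := by
      have := ((hLx x).cexp).const_mul (P t)
      simpa [mul_assoc] using this
    have := (hf.mul hg).deriv
    exact this
    try ring
  -- assemble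
  rw [hdt, hd2, hK x t]
  have hc : (2 * (Real.pi : ℂ) * Complex.I) ≠ 0 := by
    simp [Real.pi_ne_zero, Complex.I_ne_zero]
  have hstep : -(1 / 2 : ℂ) * (P t * (2 * (Real.pi : ℂ) * Complex.I * ((t : ℂ) - (t₀ : ℂ)))⁻¹)
        * (2 * (Real.pi : ℂ) * Complex.I) * Complex.exp (L x t)
      = -(1 / 2 : ℂ) * P t * ((t : ℂ) - (t₀ : ℂ))⁻¹ * Complex.exp (L x t) := by
    rw [mul_inv]
    field_simp
  have hdiv1 : Complex.I * (-2 / (2 * ((t : ℂ) - (t₀ : ℂ))) ^ 2)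
      = -(Complex.I * (((t : ℂ) - (t₀ : ℂ))⁻¹ * ((t : ℂ) - (t₀ : ℂ))⁻¹)) / 2 := by
    rw [div_eq_mul_inv,
      show (2 * ((t : ℂ) - (t₀ : ℂ))) ^ 2 = 4 * (((t : ℂ) - (t₀ : ℂ)) * ((t : ℂ) - (t₀ : ℂ)))
        from by ring, mul_inv, mul_inv]
    ring
  have hdiv2 : Complex.I / (2 * ((t : ℂ) - (t₀ : ℂ)))
      = Complex.I * ((t : ℂ) - (t₀ : ℂ))⁻¹ / 2 := by
    rw [div_eq_mul_inv, mul_inv]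
    ring
  rw [hstep, hdiv1, hdiv2]
  linear_combination (-(P t * Complex.exp (L x t) * (x : ℂ) * ((deriv ξ t : ℝ) : ℂ))) *
    Complex.I_sq
end

section
/- Fix t₀ < t and a C¹ function ξ. The propagator K₀^{(ξ)} with linear potential satisfies the convolution (Chapman–Kolmogorov) property: for t₀ < τ < t and all x, y ∈ ℝ, ∫_ℝ K₀^{(ξ)}(x,t|z,τ) K₀^{(ξ)}(z,τ|y,t₀) dz = K₀^{(ξ)}(x,t|y,t₀), where the integral is a Fresnel-type (improper/oscillatory) Gaussian integral. -/
open Complex intervalIntegral MeasureTheory Filter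

lemma mulI_cpow (r : ℝ) (hr : 0 < r) (c : ℂ) :
    ((r : ℂ) * I) ^ c = Complex.exp ((Real.log r + Real.pi / 2 * I) * c) := by
  have hz : (r : ℂ) * I ≠ 0 := by simp [Complex.ext_iff, hr.ne']
  rw [Complex.cpow_def_of_ne_zero hz]
  congr 2
  rw [Complex.log, Complex.arg_real_mul _ hr, Complex.arg_I]
  simp [Complex.norm_real, abs_of_pos hr]

lemma mulI_cpow_half (r : ℝ) (hr : 0 < r) :
    ((r : ℂ) * I) ^ ((1:ℂ)/2) = (Real.sqrt r : ℂ) * Complex.exp (Real.pi / 4 * I) := by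
  rw [mulI_cpow r hr, add_mul, Complex.exp_add]
  have h1 : (Real.sqrt r : ℂ) = Complex.exp ((Real.log r : ℂ) * (1/2)) := by
    rw [Real.sqrt_eq_rpow, Real.rpow_def_of_pos hr]
    push_cast [Complex.ofReal_exp]
    norm_num
  rw [h1]; congr 1; ring

lemma mulI_cpow_neg_half (r : ℝ) (hr : 0 < r) :
    ((r : ℂ) * I) ^ (-(1/2) : ℂ) = ((Real.sqrt r : ℂ))⁻¹ * Complex.exp (-(Real.pi / 4) * I) := by
  rw [mulI_cpow r hr, add_mul, Complex.exp_add]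
  have h1 : ((Real.sqrt r : ℂ))⁻¹ = Complex.exp ((Real.log r : ℂ) * (-(1/2))) := by
    rw [Real.sqrt_eq_rpow, Real.rpow_def_of_pos hr]
    push_cast [Complex.ofReal_exp]
    rw [← Complex.exp_neg]
    congr 1; ring
  rw [h1]; congr 1; ring

lemma pi_div_neg_mulI (b : ℝ) (hb : b ≠ 0) :
    (Real.pi : ℂ) / -((b:ℂ) * I) = ((Real.pi / b : ℝ) : ℂ) * I := by
  have hbc : (b:ℂ) ≠ 0 := Complex.ofReal_ne_zero.mpr hb
  rw [div_eq_iff (by simp [hbc, Complex.I_ne_zero])]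
  push_cast
  field_simp
  ring_nf
  simp [Complex.I_sq]

set_option maxHeartbeats 1000000 in
lemma quad_complete (T1 T2 TT : ℂ) (h1 : T1 ≠ 0) (h2 : T2 ≠ 0) (hsum : T1 + T2 = TT)
    (hTT : TT ≠ 0) (u w : ℂ) :
    I*u^2/(2*T1) + I*w^2/(2*T2)
      - (2*I*w/(2*T2) - 2*I*u/(2*T1))^2 / (4*((1/(2*T1) + 1/(2*T2))*I))
    = I/(2*TT) * (u + w)^2 := by
  subst hsum
  have h12 : T1 + T2 ≠ 0 := hTT
  have e4 : (4*((1/(2*T1) + 1/(2*T2))*I)) = (2*(T1+T2)*I) / (T1*T2) := by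
    field_simp
    ring
  have e0 : 2*I*w/(2*T2) - 2*I*u/(2*T1) = I*(w*T1 - u*T2)/(T1*T2) := by
    rw [div_sub_div _ _ (by simpa using h2) (by simpa using h1),
      div_eq_div_iff (by simp [h1, h2]) (by simp [h1, h2])]
    ring
  rw [e4, div_div_eq_mul_div, e0, div_pow, mul_pow, Complex.I_sq]
  rw [div_add_div _ _ (by simpa using h1) (by simpa using h2)]
  rw [div_mul_eq_mul_div, div_div]
  rw [div_sub_div _ _ (by simp [h1, h2]) (by simp [h1, h2, h12, Complex.I_ne_zero])]
  rw [div_mul_eq_mul_div]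
  rw [div_eq_div_iff (by simp [h1, h2, h12, Complex.I_ne_zero]) (by simp [h12])]
  ring_nf
  simp only [Complex.I_sq]
  ring

private lemma merge7 (P1 P2 a b c d e f g : ℂ) :
    Complex.exp a * (P1 * Complex.exp b * Complex.exp c * Complex.exp d) *
      (P2 * Complex.exp e * Complex.exp f * Complex.exp g)
    = (P1 * P2) * Complex.exp (a + b + c + d + e + f + g) := by
  simp only [Complex.exp_add]; ring

private lemma merge2 (P a b : ℂ) :
    P * Complex.exp a * Complex.exp b = P * Complex.exp (a + b) := by
  rw [Complex.exp_add]; ring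

/-- Chapman–Kolmogorov (convolution) property for `K₀^{(ξ)}`, with the
`z`-integral interpreted as a Fresnel-type oscillatory integral, i.e. as the
limit `ε ↓ 0` of the absolutely convergent regularized integrals
`∫ e^{−εz²} K₀^{(ξ)}(x,t|z,τ) K₀^{(ξ)}(z,τ|y,t₀) dz`. -/
theorem linProp_chapman_kolmogorov (ξ : ℝ → ℝ) (hξ : ContDiff ℝ 1 ξ)
    (t₀ τ t : ℝ) (h₁ : t₀ < τ) (h₂ : τ < t) (x y : ℝ) :
    Tendsto (fun ε : ℝ =>
        ∫ z : ℝ, (Real.exp (-ε * z ^ 2) : ℂ) * linProp ξ τ z x t * linProp ξ t₀ y z τ)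
      (nhdsWithin 0 (Set.Ioi 0)) (nhds (linProp ξ t₀ y x t)) := by
  have hc : Continuous ξ := hξ.continuous
  have hT1 : (0:ℝ) < t - τ := by linarith
  have hT2 : (0:ℝ) < τ - t₀ := by linarith
  have hTT : (0:ℝ) < t - t₀ := by linarith
  have hT1c : ((t:ℂ) - τ) ≠ 0 := by
    rw [show ((t:ℂ) - τ) = ((t - τ : ℝ) : ℂ) by push_cast; ring]
    exact_mod_cast hT1.ne'
  have hT2c : ((τ:ℂ) - t₀) ≠ 0 := by
    rw [show ((τ:ℂ) - t₀) = ((τ - t₀ : ℝ) : ℂ) by push_cast; ring]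
    exact_mod_cast hT2.ne'
  have hTTc : ((t:ℂ) - t₀) ≠ 0 := by
    rw [show ((t:ℂ) - t₀) = ((t - t₀ : ℝ) : ℂ) by push_cast; ring]
    exact_mod_cast hTT.ne'
  set S1 : ℝ := ∫ s in τ..t, ξ s with hS1
  set S2 : ℝ := ∫ s in t₀..τ, ξ s with hS2
  set Q1 : ℝ := ∫ s in τ..t, (ξ s)^2 with hQ1
  set Q2 : ℝ := ∫ s in t₀..τ, (ξ s)^2 with hQ2
  have hS : (∫ s in t₀..t, ξ s) = S2 + S1 :=
    (integral_add_adjacent_intervals (hc.intervalIntegrable _ _)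
      (hc.intervalIntegrable _ _)).symm
  have hQ : (∫ s in t₀..t, (ξ s)^2) = Q2 + Q1 :=
    (integral_add_adjacent_intervals ((hc.pow 2).intervalIntegrable _ _)
      ((hc.pow 2).intervalIntegrable _ _)).symm
  set β : ℝ := 1/(2*(t-τ)) + 1/(2*(τ-t₀)) with hβdef
  have hβ : 0 < β := by rw [hβdef]; positivity
  set cc : ℂ := 2*I*((S2:ℂ) - y)/(2*((τ:ℂ) - t₀)) - 2*I*((S1:ℂ) + x)/(2*((t:ℂ) - τ)) with hcc
  set dd : ℂ := I*((S1:ℂ) + x)^2/(2*((t:ℂ) - τ)) + I*((S2:ℂ) - y)^2/(2*((τ:ℂ) - t₀)) with hdd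
  set CC : ℂ := (2 * (Real.pi:ℂ) * I * ((t:ℂ) - τ)) ^ (-(1/2) : ℂ) *
      (2 * (Real.pi:ℂ) * I * ((τ:ℂ) - t₀)) ^ (-(1/2) : ℂ) *
      Complex.exp (-(I/2) * ((Q1:ℂ) + (Q2:ℂ)) + (I*(y:ℂ)*(ξ t₀ : ℂ) - I*(x:ℂ)*(ξ t : ℂ))) with hCC
  -- pointwise identity for the integrand
  have key : ∀ (ε : ℝ) (z : ℝ),
      (Real.exp (-ε * z ^ 2) : ℂ) * linProp ξ τ z x t * linProp ξ t₀ y z τ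
      = CC * Complex.exp ((-(ε:ℂ) + (β:ℂ)*I) * (z:ℂ)^2 + cc * (z:ℂ) + dd) := by
    intro ε z
    rw [linProp, linProp, Complex.ofReal_exp, hCC, merge7, merge2]
    congr 1
    rw [hcc, hdd, hβdef]
    push_cast
    rw [← hS1, ← hS2, ← hQ1, ← hQ2]
    ring
  -- closed form of the regularized integral for ε > 0
  have hval : ∀ ε ∈ Set.Ioi (0:ℝ),
      (∫ z : ℝ, (Real.exp (-ε * z ^ 2) : ℂ) * linProp ξ τ z x t * linProp ξ t₀ y z τ)
      = CC * (((Real.pi : ℂ) / -(-(ε:ℂ) + (β:ℂ)*I)) ^ ((1:ℂ)/2) *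
          Complex.exp (dd - cc^2 / (4 * (-(ε:ℂ) + (β:ℂ)*I)))) := by
    intro ε hε
    have hε' : (0:ℝ) < ε := hε
    have hb : ((-(ε:ℂ) + (β:ℂ)*I)).re < 0 := by
      simp only [Complex.add_re, Complex.neg_re, Complex.ofReal_re, Complex.mul_re,
        Complex.I_re, Complex.I_im, Complex.ofReal_im]
      simp
      linarith
    simp only [key]
    rw [MeasureTheory.integral_const_mul, integral_cexp_quadratic hb cc dd]
  have hne : ∀ ε : ℝ, (-(ε:ℂ) + (β:ℂ)*I) ≠ 0 := by
    intro ε h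
    have := congrArg Complex.im h
    simp at this
    exact hβ.ne' this
  -- the closed form is continuous at ε = 0
  have hcont : ContinuousAt (fun ε : ℝ =>
      CC * (((Real.pi : ℂ) / -(-(ε:ℂ) + (β:ℂ)*I)) ^ ((1:ℂ)/2) *
        Complex.exp (dd - cc^2 / (4 * (-(ε:ℂ) + (β:ℂ)*I))))) 0 := by
    have hbase : ContinuousAt (fun ε : ℝ => (-(ε:ℂ) + (β:ℂ)*I)) 0 :=
      ((Complex.continuous_ofReal.continuousAt).neg.add continuousAt_const)
    have hdiv : ContinuousAt (fun ε : ℝ => (Real.pi : ℂ) / -(-(ε:ℂ) + (β:ℂ)*I)) 0 :=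
      continuousAt_const.div hbase.neg (by simpa using hne 0)
    have hslit : ((Real.pi : ℂ) / -(-((0:ℝ):ℂ) + (β:ℂ)*I)) ∈ Complex.slitPlane := by
      have h0 : ((Real.pi : ℂ) / -(-((0:ℝ):ℂ) + (β:ℂ)*I)) = ((Real.pi/β : ℝ) : ℂ) * I := by
        simp only [Complex.ofReal_zero, neg_zero, zero_add]
        exact pi_div_neg_mulI β hβ.ne'
      rw [h0]
      right
      simpa using (div_pos Real.pi_pos hβ).ne'
    have hpow : ContinuousAt (fun ε : ℝ =>
        ((Real.pi : ℂ) / -(-(ε:ℂ) + (β:ℂ)*I)) ^ ((1:ℂ)/2)) 0 :=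
      hdiv.cpow continuousAt_const hslit
    have hexp : ContinuousAt (fun ε : ℝ =>
        Complex.exp (dd - cc^2 / (4 * (-(ε:ℂ) + (β:ℂ)*I)))) 0 := by
      apply Complex.continuous_exp.continuousAt.comp
      apply ContinuousAt.sub continuousAt_const
      apply ContinuousAt.div continuousAt_const (continuousAt_const.mul hbase)
      simpa using hne 0
    exact continuousAt_const.mul (hpow.mul hexp)
  -- value at 0 is the target
  have hzero : CC * (((Real.pi : ℂ) / -(-((0:ℝ):ℂ) + (β:ℂ)*I)) ^ ((1:ℂ)/2) *
      Complex.exp (dd - cc^2 / (4 * (-((0:ℝ):ℂ) + (β:ℂ)*I)))) = linProp ξ t₀ y x t := by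
    have hβc : ((β:ℝ):ℂ) ≠ 0 := Complex.ofReal_ne_zero.mpr hβ.ne'
    have h4 : (4 * (((β:ℝ):ℂ) * I)) ≠ 0 := by simp [hβc, Complex.I_ne_zero]
    have hId : dd - cc^2 / (4 * ((β:ℂ)*I)) =
        I / (2*((t:ℂ) - t₀)) * (((S1:ℂ) + (x:ℂ)) + ((S2:ℂ) - (y:ℂ)))^2 := by
      rw [hcc, hdd,
        show ((β:ℝ):ℂ) = 1/(2*((t:ℂ) - τ)) + 1/(2*((τ:ℂ) - t₀)) by
          rw [hβdef]; push_cast; ring]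
      exact quad_complete _ _ _ hT1c hT2c (by ring) hTTc _ _
    have pos0 : (0:ℝ) < Real.pi/β := div_pos Real.pi_pos hβ
    have pos1 : (0:ℝ) < 2*Real.pi*(t-τ) := by
      have := Real.pi_pos; nlinarith
    have pos2 : (0:ℝ) < 2*Real.pi*(τ-t₀) := by
      have := Real.pi_pos; nlinarith
    have posT : (0:ℝ) < 2*Real.pi*(t-t₀) := by
      have := Real.pi_pos; nlinarith
    have hβ' : 1/(2*(t-τ)) + 1/(2*(τ-t₀)) ≠ 0 := by rw [← hβdef]; exact hβ.ne'
    have hsq : Real.sqrt (Real.pi/β) * Real.sqrt (2*Real.pi*(t-t₀))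
        = Real.sqrt (2*Real.pi*(t-τ)) * Real.sqrt (2*Real.pi*(τ-t₀)) := by
      rw [← Real.sqrt_mul pos0.le, ← Real.sqrt_mul pos1.le]
      congr 1
      rw [hβdef]
      field_simp
      ring
    have hsqc : ((Real.sqrt (Real.pi/β) : ℝ):ℂ) * ((Real.sqrt (2*Real.pi*(t-t₀)) : ℝ):ℂ)
        = ((Real.sqrt (2*Real.pi*(t-τ)) : ℝ):ℂ) * ((Real.sqrt (2*Real.pi*(τ-t₀)) : ℝ):ℂ) := by
      exact_mod_cast hsq
    have hB1 : ((Real.sqrt (2*Real.pi*(t-τ)) : ℝ):ℂ) ≠ 0 :=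
      Complex.ofReal_ne_zero.mpr (Real.sqrt_ne_zero'.mpr pos1)
    have hB2 : ((Real.sqrt (2*Real.pi*(τ-t₀)) : ℝ):ℂ) ≠ 0 :=
      Complex.ofReal_ne_zero.mpr (Real.sqrt_ne_zero'.mpr pos2)
    have hBT : ((Real.sqrt (2*Real.pi*(t-t₀)) : ℝ):ℂ) ≠ 0 :=
      Complex.ofReal_ne_zero.mpr (Real.sqrt_ne_zero'.mpr posT)
    have hEF : Complex.exp (Real.pi/4*I) * Complex.exp (-(Real.pi/4)*I) = 1 := by
      rw [← Complex.exp_add, show ((Real.pi:ℂ)/4*I + -((Real.pi:ℂ)/4)*I : ℂ) = 0 by ring,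
        Complex.exp_zero]
    have hsqrt : ((Real.sqrt (Real.pi/β) : ℝ):ℂ) * Complex.exp (Real.pi/4*I) *
        (((Real.sqrt (2*Real.pi*(t-τ)) : ℝ):ℂ)⁻¹ * Complex.exp (-(Real.pi/4)*I)) *
        (((Real.sqrt (2*Real.pi*(τ-t₀)) : ℝ):ℂ)⁻¹ * Complex.exp (-(Real.pi/4)*I))
        = ((Real.sqrt (2*Real.pi*(t-t₀)) : ℝ):ℂ)⁻¹ * Complex.exp (-(Real.pi/4)*I) := by
      have step : ((Real.sqrt (Real.pi/β) : ℝ):ℂ) *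
          (((Real.sqrt (2*Real.pi*(t-τ)) : ℝ):ℂ)⁻¹ * ((Real.sqrt (2*Real.pi*(τ-t₀)) : ℝ):ℂ)⁻¹)
          = ((Real.sqrt (2*Real.pi*(t-t₀)) : ℝ):ℂ)⁻¹ := by
        rw [← mul_inv, ← div_eq_mul_inv, inv_eq_one_div, div_eq_div_iff
          (mul_ne_zero hB1 hB2) hBT]
        linear_combination hsqc
      calc ((Real.sqrt (Real.pi/β) : ℝ):ℂ) * Complex.exp (Real.pi/4*I) *
            (((Real.sqrt (2*Real.pi*(t-τ)) : ℝ):ℂ)⁻¹ * Complex.exp (-(Real.pi/4)*I)) *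
            (((Real.sqrt (2*Real.pi*(τ-t₀)) : ℝ):ℂ)⁻¹ * Complex.exp (-(Real.pi/4)*I))
          = (((Real.sqrt (Real.pi/β) : ℝ):ℂ) *
              (((Real.sqrt (2*Real.pi*(t-τ)) : ℝ):ℂ)⁻¹ * ((Real.sqrt (2*Real.pi*(τ-t₀)) : ℝ):ℂ)⁻¹)) *
              ((Complex.exp (Real.pi/4*I) * Complex.exp (-(Real.pi/4)*I)) *
                Complex.exp (-(Real.pi/4)*I)) := by ring
        _ = ((Real.sqrt (2*Real.pi*(t-t₀)) : ℝ):ℂ)⁻¹ * Complex.exp (-(Real.pi/4)*I) := by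
            rw [step, hEF, one_mul]
    simp only [Complex.ofReal_zero, neg_zero, zero_add]
    rw [pi_div_neg_mulI β hβ.ne', hId, linProp, hS, hQ, hCC]
    rw [show (2 * (Real.pi:ℂ) * I * ((t:ℂ) - τ)) = (((2*Real.pi*(t - τ) : ℝ)):ℂ) * I by
        push_cast; ring,
      show (2 * (Real.pi:ℂ) * I * ((τ:ℂ) - t₀)) = (((2*Real.pi*(τ - t₀) : ℝ)):ℂ) * I by
        push_cast; ring,
      show (2 * (Real.pi:ℂ) * I * ((t:ℂ) - (t₀:ℂ))) = (((2*Real.pi*(t - t₀) : ℝ)):ℂ) * I by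
        push_cast; ring,
      mulI_cpow_half _ pos0, mulI_cpow_neg_half _ pos1, mulI_cpow_neg_half _ pos2,
      mulI_cpow_neg_half _ posT]
    have hexps : Complex.exp (-(I/2) * ((Q1:ℂ) + (Q2:ℂ)) + (I*(y:ℂ)*(ξ t₀ : ℂ) - I*(x:ℂ)*(ξ t : ℂ))) *
        Complex.exp (I / (2*((t:ℂ) - t₀)) * (((S1:ℂ) + (x:ℂ)) + ((S2:ℂ) - (y:ℂ)))^2)
        = Complex.exp (-(I/2) * (((Q2 + Q1 : ℝ)):ℂ)) *
          Complex.exp (I / (2 * ((t:ℂ) - (t₀:ℂ))) * ((((S2 + S1 : ℝ)):ℂ) + (x:ℂ) - (y:ℂ))^2) *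
          Complex.exp (I*(y:ℂ)*(ξ t₀ : ℂ) - I*(x:ℂ)*(ξ t : ℂ)) := by
      rw [← Complex.exp_add, ← Complex.exp_add, ← Complex.exp_add]
      congr 1
      push_cast
      ring
    have hfin := congrArg₂ (fun a b : ℂ => a * b) hsqrt hexps
    linear_combination hfin
  -- conclude
  have h0 : Tendsto (fun ε : ℝ =>
      CC * (((Real.pi : ℂ) / -(-(ε:ℂ) + (β:ℂ)*I)) ^ ((1:ℂ)/2) *
        Complex.exp (dd - cc^2 / (4 * (-(ε:ℂ) + (β:ℂ)*I)))))
      (nhdsWithin 0 (Set.Ioi 0)) (nhds (linProp ξ t₀ y x t)) := by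
    have := hcont.tendsto.mono_left (nhdsWithin_le_nhds (s := Set.Ioi (0:ℝ)))
    rwa [hzero] at this
  exact Tendsto.congr'
    (Filter.eventuallyEq_of_mem self_mem_nhdsWithin fun ε hε => (hval ε hε).symm) h0
end
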